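/- Non-emptiness characterization: L(A) ≠ ∅ if and only if there exists a finite event sequence u ∈ Σ* such that the formula Accept_A(u) = Post_A(ι,u) ∧ ⋀_{q∈Q∖F}(q → ⊥) is satisfiable. -/
import Mathlib


/-- Positive Boolean formulas over variables `V` (occurring only positively)
and atoms `A` (which may occur negated, via `natom`). -/
inductive BForm (V A : Type) : Type
  | tru : BForm V A
  | fls : BForm V A
  | var (v : V) : BForm V A
  | atom (a : A) : BForm V A
  | natom (a : A) : BForm V A
  | and (f g : BForm V A) : BForm V A
  | or (f g : BForm V A) : BForm V A

namespace BForm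

variable {V A B W : Type}

/-- Satisfaction of a formula under a valuation `β` of the variables and `ι` of the atoms. -/
def Eval (β : V → Prop) (ι : A → Prop) : BForm V A → Prop
  | tru => True
  | fls => False
  | var v => β v
  | atom a => ι a
  | natom a => ¬ ι a
  | and f g => Eval β ι f ∧ Eval β ι g
  | or f g => Eval β ι f ∨ Eval β ι g

/-- The dual formula: swap `∧`/`∨`, fix variables, negate atoms. -/
def dual : BForm V A → BForm V A
  | tru => fls
  | fls => tru
  | var v => var v
  | atom a => natom a
  | natom a => atom a
  | and f g => or (dual f) (dual g)
  | or f g => and (dual f) (dual g)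

/-- Number of symbols of a formula. -/
def size : BForm V A → Nat
  | tru => 1
  | fls => 1
  | var _ => 1
  | atom _ => 1
  | natom _ => 1 + 1
  | and f g => size f + size g + 1
  | or f g => size f + size g + 1

/-- Simultaneous substitution of the variables by formulas. -/
def subst (Δ : V → BForm V A) : BForm V A → BForm V A
  | tru => tru
  | fls => fls
  | var v => Δ v
  | atom a => atom a
  | natom a => natom a
  | and f g => and (subst Δ f) (subst Δ g)
  | or f g => or (subst Δ f) (subst Δ g)

/-- Renaming of variables. -/
def rename (h : V → W) : BForm V A → BForm W A
  | tru => tru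
  | fls => fls
  | var v => var (h v)
  | atom a => atom a
  | natom a => natom a
  | and f g => and (rename h f) (rename h g)
  | or f g => or (rename h f) (rename h g)

/-- Renaming of atoms. -/
def mapAtom (h : A → B) : BForm V A → BForm V B
  | tru => tru
  | fls => fls
  | var v => var v
  | atom a => atom (h a)
  | natom a => natom (h a)
  | and f g => and (mapAtom h f) (mapAtom h g)
  | or f g => or (mapAtom h f) (mapAtom h g)

end BForm
/-- An alternating data automaton over states `Q`, input events `E`, data
variables `X` and data domain `D`.  A transition formula is a positive Boolean
formula over the states whose atoms are constraints relating the previous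
(`x̄`) and current (`x`) data valuations. -/
structure ADA (Q E X D : Type) where
  /-- the initial configuration `ι ∈ Form⁺(Q, ∅)` -/
  init : BForm Q Empty
  /-- the final states -/
  final : Q → Prop
  /-- the transition function `Δ` -/
  tr : Q → E → BForm Q ((X → D) → (X → D) → Prop)

namespace ADA

variable {Q Q₁ Q₂ E X D : Type}

/-- Top-down acceptance semantics: `Sem M w prev q` holds iff the automaton,
started in state `q` with previous data valuation `prev`, accepts the rest of
the data word `w`. -/
def Sem (M : ADA Q E X D) : List (E × (X → D)) → (X → D) → Q → Prop
  | [], _, q => M.final q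
  | (a, ν) :: w, prev, q =>
      BForm.Eval (fun q' => Sem M w ν q') (fun p => p prev ν) (M.tr q a)

/-- The language of an ADA: the initial data values are unconstrained. -/
def lang (M : ADA Q E X D) : Set (List (E × (X → D))) :=
  { w | ∃ ν₀ : X → D, BForm.Eval (fun q => Sem M w ν₀ q) Empty.elim M.init }

/-- The union automaton: disjoint union of states, disjunction of initial
configurations, union of final states and of transition functions. -/
def union (M₁ : ADA Q₁ E X D) (M₂ : ADA Q₂ E X D) : ADA (Q₁ ⊕ Q₂) E X D where
  init := .or (M₁.init.rename Sum.inl) (M₂.init.rename Sum.inr)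
  final := Sum.elim M₁.final M₂.final
  tr := fun q a =>
    match q with
    | .inl q => (M₁.tr q a).rename Sum.inl
    | .inr q => (M₂.tr q a).rename Sum.inr

/-- The intersection automaton: disjoint union of states, conjunction of
initial configurations, union of final states and of transition functions. -/
def inter (M₁ : ADA Q₁ E X D) (M₂ : ADA Q₂ E X D) : ADA (Q₁ ⊕ Q₂) E X D where
  init := .and (M₁.init.rename Sum.inl) (M₂.init.rename Sum.inr)
  final := Sum.elim M₁.final M₂.final
  tr := fun q a =>
    match q with
    | .inl q => (M₁.tr q a).rename Sum.inl
    | .inr q => (M₂.tr q a).rename Sum.inr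

/-- The complement automaton: dual initial configuration, complemented final
states, dual transition formulas. -/
def compl (M : ADA Q E X D) : ADA Q E X D where
  init := M.init.dual
  final := fun q => ¬ M.final q
  tr := fun q a => (M.tr q a).dual

end ADA
namespace ADA

variable {Q E X D : Type}

/-- Semantic configurations: sets of pairs of a Boolean valuation of the states
and a data valuation. -/
abbrev Conf (Q X D : Type) := (Q → Prop) → (X → D) → Prop

/-- The one-step post-image `Post_M(φ, a) = ∃x̄. Δ(φ[x̄/x], a)`:
each state `q` of `φ` is replaced by `Δ(q,a)` and the previous data values are
projected out existentially. -/
def post (M : ADA Q E X D) (C : Conf Q X D) (a : E) : Conf Q X D :=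
  fun β ν => ∃ νp : X → D,
    C (fun q => BForm.Eval β (fun p => p νp ν) (M.tr q a)) νp

/-- The post-image along a finite sequence of input events:
`Post_M(φ, ε) = φ` and `Post_M(φ, u·a) = Post_M(Post_M(φ, u), a)`. -/
def postSeq (M : ADA Q E X D) (C : Conf Q X D) (u : List E) : Conf Q X D :=
  u.foldl (post M) C

/-- The semantic configuration of the initial formula `ι` (no data constraints). -/
def initConf (M : ADA Q E X D) : Conf Q X D :=
  fun β _ => BForm.Eval β Empty.elim M.init

/-- `Accept_M(u) = Post_M(ι,u) ∧ ⋀_{q ∈ Q∖F} (q → ⊥)`. -/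
def AcceptF (M : ADA Q E X D) (u : List E) (β : Q → Prop) (ν : X → D) : Prop :=
  postSeq M (initConf M) u β ν ∧ ∀ q : Q, ¬ M.final q → ¬ β q

end ADA


lemma BForm.eval_mono {V A : Type} {β β' : V → Prop} {ι : A → Prop}
    (h : ∀ v, β v → β' v) : ∀ f : BForm V A, BForm.Eval β ι f → BForm.Eval β' ι f
  | .tru, h' => h'
  | .fls, h' => h'
  | .var v, h' => h v h'
  | .atom _, h' => h'
  | .natom _, h' => h'
  | .and f g, ⟨hf, hg⟩ => ⟨BForm.eval_mono h f hf, BForm.eval_mono h g hg⟩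
  | .or f g, h' => h'.imp (BForm.eval_mono h f) (BForm.eval_mono h g)

lemma ADA.lemA {Q E X D : Type} (M : ADA Q E X D) :
    ∀ (w : List (E × (X → D))) (C : ADA.Conf Q X D) (ν₀ : X → D),
      C (fun q => ADA.Sem M w ν₀ q) ν₀ →
      ∃ ν, ADA.postSeq M C (w.map Prod.fst) M.final ν
  | [], _, ν₀, h => ⟨ν₀, h⟩
  | (a, ν) :: w, C, ν₀, h =>
      ADA.lemA M w (ADA.post M C a) ν ⟨ν₀, h⟩

/-- Monotone configurations. -/
def ADA.Mono {Q X D : Type} (C : ADA.Conf Q X D) : Prop :=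
  ∀ (β β' : Q → Prop) (ν : X → D), (∀ q, β q → β' q) → C β ν → C β' ν

lemma ADA.post_mono {Q E X D : Type} (M : ADA Q E X D) {C : ADA.Conf Q X D}
    (hC : ADA.Mono C) (a : E) : ADA.Mono (ADA.post M C a) := by
  rintro β β' ν h ⟨νp, hc⟩
  exact ⟨νp, hC _ _ _ (fun q => BForm.eval_mono h _) hc⟩

lemma ADA.lemB {Q E X D : Type} (M : ADA Q E X D) :
    ∀ (u : List E) (C : ADA.Conf Q X D), ADA.Mono C →
      ∀ (β : Q → Prop) (ν : X → D), ADA.postSeq M C u β ν →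
      (∀ q, β q → M.final q) →
      ∃ (w : List (E × (X → D))) (νp : X → D),
        w.map Prod.fst = u ∧ C (fun q => ADA.Sem M w νp q) νp
  | [], C, hC, β, ν, h, hβ => ⟨[], ν, rfl, hC _ _ _ hβ h⟩
  | a :: u, C, hC, β, ν, h, hβ => by
      obtain ⟨w', νp, hw, hc⟩ :=
        ADA.lemB M u (ADA.post M C a) (ADA.post_mono M hC a) β ν h hβ
      obtain ⟨νpp, hcc⟩ := hc
      exact ⟨(a, νp) :: w', νpp, by simp [hw], hcc⟩

/-- Non-emptiness characterization: `L(M) ≠ ∅` iff there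
exists a finite event sequence `u` such that the acceptance formula
`Accept_M(u) = Post_M(ι,u) ∧ ⋀_{q∈Q∖F}(q → ⊥)` is satisfiable. -/
theorem lang_nonempty_iff_accept_sat {Q E X D : Type} (M : ADA Q E X D) :
    ADA.lang M ≠ ∅ ↔
      ∃ (u : List E) (β : Q → Prop) (ν : X → D), ADA.AcceptF M u β ν := by
  classical
  constructor
  · intro h
    obtain ⟨w, hw⟩ := Set.nonempty_iff_ne_empty.2 h
    obtain ⟨ν₀, hν₀⟩ := hw
    obtain ⟨ν, hν⟩ := ADA.lemA M w (ADA.initConf M) ν₀ hν₀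
    exact ⟨w.map Prod.fst, M.final, ν, hν, fun q hq => hq⟩
  · rintro ⟨u, β, ν, hpost, hβ⟩
    have hmono : ADA.Mono (ADA.initConf M) := by
      intro β β' ν h hc
      exact BForm.eval_mono h _ hc
    obtain ⟨w, νp, -, hc⟩ := ADA.lemB M u (ADA.initConf M) hmono β ν hpost
      (fun q hq => by by_contra hf; exact hβ q hf hq)
    exact Set.nonempty_iff_ne_empty.1 ⟨w, νp, hc⟩
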